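/- arXiv:1810.09423 — 3 statements merged into one kernel-verified Lean document; each statement's English description precedes it below -/
import Mathlib

section
/- Let f ∈ K[[x₁,...,xₙ]] have finite Milnor number μ. Then the image of the map Der(R)^(2) → R, v ↦ v(f), contains 𝓜^{μ+2}. -/
/-- Formal partial derivative `∂ᵢ` of a multivariate formal power series. -/
noncomputable def mvPderiv {n : ℕ} {K : Type*} [CommRing K] (i : Fin n)
    (f : MvPowerSeries (Fin n) K) : MvPowerSeries (Fin n) K :=
  fun m => ((m i + 1 : ℕ) : K) * MvPowerSeries.coeff (R := K) (m + Finsupp.single i 1) f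

/-!
Over the local ring `R = K[[x]]`, the images of `𝓜ᵏ` in the `μ`-dimensional space `R ⧸ J_f` form a
decreasing chain which, by Nakayama's lemma, drops in dimension at every step until it reaches
zero. Hence `𝓜^μ ⊆ J_f`, so `𝓜^{μ+2} ⊆ 𝓜² J_f`, and an element `∑ aᵢ ∂ᵢf` of `𝓜² J_f` with
`aᵢ ∈ 𝓜²` is exactly `v(f)` for the derivation `v = ∑ aᵢ ∂ᵢ`.
-/

open Module

namespace Submodule

variable {K R M : Type*} [Field K] [CommRing R] [Algebra K R] [AddCommGroup M] [Module K M]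
  [Module R M] [IsScalarTower K R M] [FiniteDimensional K M]

theorem finrank_ideal_smul_lt_of_le_jacobson_bot {I : Ideal R} (hI : I ≤ (⊥ : Ideal R).jacobson)
    {N : Submodule R M} (hN : N ≠ ⊥) :
    finrank K ((I • N).restrictScalars K) < finrank K (N.restrictScalars K) := by
  have : IsNoetherian R M := isNoetherian_of_tower K inferInstance
  have hlt : I • N < N := lt_of_le_of_ne smul_le_right fun h =>
    hN (eq_bot_of_le_smul_of_le_jacobson_bot I N (IsNoetherian.noetherian N) h.ge hI)
  exact finrank_lt_finrank_of_lt ((restrictScalarsEmbedding K R M).lt_iff_lt.mpr hlt)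

theorem ideal_pow_finrank_smul_top_eq_bot {I : Ideal R} (hI : I ≤ (⊥ : Ideal R).jacobson) :
    I ^ finrank K M • (⊤ : Submodule R M) = ⊥ := by
  have hdim (k : ℕ) :
      finrank K ((I ^ k • (⊤ : Submodule R M)).restrictScalars K) ≤ finrank K M - k := by
    induction k with
    | zero => exact finrank_le _
    | succ k ih =>
      rw [pow_succ', Submodule.mul_smul]
      by_cases hbot : I ^ k • (⊤ : Submodule R M) = ⊥
      · rw [hbot, smul_bot, restrictScalars_bot, finrank_bot]
        exact Nat.zero_le _
      · have := finrank_ideal_smul_lt_of_le_jacobson_bot (K := K) hI hbot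
        omega
  have hzero := hdim (finrank K M)
  rwa [Nat.sub_self, Nat.le_zero, finrank_eq_zero, restrictScalars_eq_bot_iff] at hzero

end Submodule

theorem Ideal.pow_finrank_quotient_le {K R : Type*} [Field K] [CommRing R] [Algebra K R]
    {I : Ideal R} (hI : I ≤ (⊥ : Ideal R).jacobson) (J : Ideal R) [FiniteDimensional K (R ⧸ J)] :
    I ^ finrank K (R ⧸ J) ≤ J := by
  intro x hx
  have hmk : x • (1 : R ⧸ J) ∈ I ^ finrank K (R ⧸ J) • (⊤ : Submodule R (R ⧸ J)) :=
    Submodule.smul_mem_smul hx Submodule.mem_top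
  rwa [Submodule.ideal_pow_finrank_smul_top_eq_bot hI, Submodule.mem_bot, Algebra.smul_def,
    mul_one, Ideal.Quotient.algebraMap_eq, Ideal.Quotient.eq_zero_iff_mem] at hmk

theorem MvPowerSeries.ker_constantCoeff_eq_maximalIdeal {σ k : Type*} [Field k] :
    RingHom.ker (constantCoeff (σ := σ) (R := k)) =
      IsLocalRing.maximalIdeal (MvPowerSeries σ k) := by
  ext x
  rw [RingHom.mem_ker, IsLocalRing.mem_maximalIdeal, mem_nonunits_iff, isUnit_iff_constantCoeff,
    isUnit_iff_ne_zero, not_ne_iff]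

theorem Ideal.mem_mul_span_range_iff_exists_fun {R ι : Type*} [CommRing R] [Fintype ι]
    (I : Ideal R) (f : ι → R) (x : R) :
    x ∈ I * Ideal.span (Set.range f) ↔ ∃ a : ι → R, (∀ i, a i ∈ I) ∧ ∑ i, a i * f i = x := by
  have hsum (a : ι →₀ R) : (a.sum fun i c => c • f i) = ∑ i, a i * f i :=
    Finsupp.sum_fintype a (fun i c => c • f i) fun i => zero_smul R (f i)
  rw [← smul_eq_mul, Ideal.span, Submodule.mem_ideal_smul_span_iff_exists_sum]
  constructor
  · rintro ⟨a, ha, rfl⟩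
    exact ⟨a, ha, (hsum a).symm⟩
  · rintro ⟨a, ha, rfl⟩
    exact ⟨Finsupp.equivFunOnFinite.symm a, ha, hsum _⟩

theorem image_of_order_two_derivations_contains_general
    (K : Type*) [Field K] (n : ℕ) (f : MvPowerSeries (Fin n) K)
    (Jf : Ideal (MvPowerSeries (Fin n) K))
    (hJf : Jf = Ideal.span (Set.range fun i => mvPderiv i f))
    (𝓜 : Ideal (MvPowerSeries (Fin n) K))
    (h𝓜 : 𝓜 = RingHom.ker (MvPowerSeries.constantCoeff (σ := Fin n) (R := K)))
    [FiniteDimensional K (MvPowerSeries (Fin n) K ⧸ Jf)]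
    (μ : ℕ) (hμ : μ = Module.finrank K (MvPowerSeries (Fin n) K ⧸ Jf)) :
    ∀ g ∈ 𝓜 ^ (μ + 2), ∃ a : Fin n → MvPowerSeries (Fin n) K,
      (∀ i, a i ∈ 𝓜 ^ 2) ∧ ∑ i, a i * mvPderiv i f = g := by
  intro g hg
  have hpow : 𝓜 ^ μ ≤ Jf := by
    rw [hμ, h𝓜, MvPowerSeries.ker_constantCoeff_eq_maximalIdeal]
    exact Ideal.pow_finrank_quotient_le
      (IsLocalRing.jacobson_eq_maximalIdeal ⊥ bot_ne_top).ge Jf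
  have hg' : g ∈ 𝓜 ^ 2 * Jf := by
    rw [add_comm, pow_add] at hg
    exact Ideal.mul_mono_right hpow hg
  rw [hJf] at hg'
  exact (Ideal.mem_mul_span_range_iff_exists_fun _ _ _).mp hg'

/-- if `f` has finite Milnor number `μ` then every `g ∈ 𝓜^{μ+2}` is of
the form `v(f)` for a derivation `v = Σ aᵢ∂ᵢ` with coefficients `aᵢ ∈ 𝓜²`. -/
theorem image_of_order_two_derivations_contains
    (K : Type*) [Field K] [CharZero K] (n : ℕ) (f : MvPowerSeries (Fin n) K)
    (Jf : Ideal (MvPowerSeries (Fin n) K))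
    (hJf : Jf = Ideal.span (Set.range fun i => mvPderiv i f))
    (𝓜 : Ideal (MvPowerSeries (Fin n) K))
    (h𝓜 : 𝓜 = RingHom.ker (MvPowerSeries.constantCoeff (σ := Fin n) (R := K)))
    [FiniteDimensional K (MvPowerSeries (Fin n) K ⧸ Jf)]
    (μ : ℕ) (hμ : μ = Module.finrank K (MvPowerSeries (Fin n) K ⧸ Jf)) :
    ∀ g ∈ 𝓜 ^ (μ + 2), ∃ a : Fin n → MvPowerSeries (Fin n) K,
      (∀ i, a i ∈ 𝓜 ^ 2) ∧ ∑ i, a i * mvPderiv i f = g :=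
  image_of_order_two_derivations_contains_general K n f Jf hJf 𝓜 h𝓜 μ hμ
end

section
/- Let λ ∈ ℂⁿ lie in the Poincaré domain, i.e. 0 is not in the convex hull of {λ₁,...,λₙ}. Then for each i ∈ {1,...,n}: (a) the set of nonzero values {|⟨λ,I⟩ − λᵢ| : I ∈ ℕⁿ, ⟨λ,I⟩ ≠ λᵢ} is bounded below by a positive constant, and (b) the set {I ∈ ℕⁿ : ⟨λ,I⟩ = λᵢ} is finite. -/
/-!
Separating `0` from the convex hull of the `λⱼ` gives a real functional `f` with `f λⱼ ≥ 1`,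
so `Iⱼ ≤ f ⟨λ, I⟩ ≤ ‖f‖ ‖⟨λ, I⟩‖`: only finitely many `I` have `‖⟨λ, I⟩ - λᵢ‖` below any bound.
Resonances form the sublevel set at `0`, and the finitely many positive values below `1` have a
positive minimum.
-/

open Filter Topology

section

variable {E ι : Type*} [NormedAddCommGroup E] [NormedSpace ℝ E]

theorem exists_strongDual_one_le_of_zero_notMem_convexHull [Finite ι] {v : ι → E}
    (h : (0 : E) ∉ convexHull ℝ (Set.range v)) :
    ∃ f : StrongDual ℝ E, ∀ j, 1 ≤ f (v j) := by
  obtain ⟨f, u, hf0, hfu⟩ := geometric_hahn_banach_point_closed (convex_convexHull ℝ _)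
    ((Set.finite_range v).isClosed_convexHull ℝ) h
  have hu : 0 < u := by simpa using hf0
  refine ⟨u⁻¹ • f, fun j => ?_⟩
  rw [smul_apply, smul_eq_mul, le_inv_mul_iff₀ hu, mul_one]
  exact (hfu (v j) (subset_convexHull ℝ _ ⟨j, rfl⟩)).le

theorem le_apply_sum_nsmul [Fintype ι] {v : ι → E} {f : StrongDual ℝ E}
    (hf : ∀ j, 1 ≤ f (v j)) (I : ι → ℕ) (j : ι) :
    (I j : ℝ) ≤ f (∑ k, I k • v k) := by
  simp only [map_sum, map_nsmul, nsmul_eq_mul]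
  calc (I j : ℝ) ≤ I j * f (v j) := le_mul_of_one_le_right (Nat.cast_nonneg _) (hf j)
    _ ≤ ∑ k, I k * f (v k) :=
      Finset.single_le_sum (fun k _ => mul_nonneg (Nat.cast_nonneg _) (zero_le_one.trans (hf k)))
        (Finset.mem_univ j)

theorem finite_setOf_norm_sum_nsmul_sub_le [Fintype ι] {v : ι → E}
    (h : (0 : E) ∉ convexHull ℝ (Set.range v)) (w : E) (R : ℝ) :
    {I : ι → ℕ | ‖∑ j, I j • v j - w‖ ≤ R}.Finite := by
  classical
  obtain ⟨f, hf⟩ := exists_strongDual_one_le_of_zero_notMem_convexHull h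
  refine (Set.finite_Iic fun _ => ⌊‖f‖ * (R + ‖w‖)⌋₊).subset fun I hI j => Nat.le_floor ?_
  calc (I j : ℝ) ≤ f (∑ k, I k • v k) := le_apply_sum_nsmul hf I j
    _ ≤ ‖f‖ * ‖∑ k, I k • v k‖ := (le_abs_self _).trans (f.le_opNorm _)
    _ ≤ ‖f‖ * (R + ‖w‖) := by
      gcongr
      exact (norm_le_norm_sub_add _ w).trans (by gcongr; exact hI)

end

theorem exists_pos_le_of_finite_setOf_le {α : Type*} (g : α → ℝ) {ε : ℝ} (hε : 0 < ε)
    (hg : {x | g x ≤ ε}.Finite) : ∃ c > 0, ∀ x, 0 < g x → c ≤ g x := by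
  have hsmall : ∀ᶠ c in 𝓝[>] (0 : ℝ), ∀ x ∈ {x | g x ≤ ε}, 0 < g x → c ≤ g x := by
    refine (eventually_all_finite hg).2 fun x _ => ?_
    by_cases hx : 0 < g x
    · exact ((eventually_le_nhds hx).filter_mono nhdsWithin_le_nhds).mono fun _ hc _ => hc
    · exact .of_forall fun _ hx' => absurd hx' hx
  obtain ⟨c, hc, hcε, hcg⟩ := (eventually_mem_nhdsWithin.and
    (((eventually_le_nhds hε).filter_mono nhdsWithin_le_nhds).and hsmall)).exists
  refine ⟨c, hc, fun x hx => ?_⟩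
  by_cases hxε : g x ≤ ε
  · exact hcg x hxε hx
  · exact hcε.trans (not_le.1 hxε).le

/-- if `λ ∈ ℂⁿ` lies in the Poincaré domain (`0` not in the convex
hull of its components), then for each `i` the nonzero values `|⟨λ,I⟩ − λᵢ|`,
`I ∈ ℕⁿ`, are bounded below by a positive constant, and the set of resonances
`{I : ⟨λ,I⟩ = λᵢ}` is finite. -/
theorem poincare_domain_small_divisors
    (n : ℕ) (lam : Fin n → ℂ)
    (h : (0 : ℂ) ∉ convexHull ℝ (Set.range lam)) :
    ∀ i : Fin n,
      (∃ c > 0, ∀ I : Fin n → ℕ,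
        (∑ j, (I j : ℂ) * lam j) ≠ lam i →
          c ≤ ‖(∑ j, (I j : ℂ) * lam j) - lam i‖) ∧
      Set.Finite {I : Fin n → ℕ | (∑ j, (I j : ℂ) * lam j) = lam i} := by
  intro i
  simp_rw [← nsmul_eq_mul]
  have hfin := finite_setOf_norm_sum_nsmul_sub_le h (lam i)
  refine ⟨?_, (hfin 0).subset fun I (hI : _ = _) =>
    show ‖_ - _‖ ≤ 0 by rw [hI, sub_self, norm_zero]⟩
  obtain ⟨c, hc, hcle⟩ := exists_pos_le_of_finite_setOf_le _ one_pos (hfin 1)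
  exact ⟨c, hc, fun I hI => hcle I (norm_pos_iff.2 (sub_ne_zero.2 hI))⟩
end

section
/- Weierstrass division in formal power series: let R' = K[[x₁,...,x_{n−1}]] and R = R'[[y]], and let g ∈ R'[y] be a Weierstrass polynomial of degree d, i.e. g = y^d + a₁y^{d−1} + ... + a_d with aᵢ ∈ R' and aᵢ(0) = 0. Then for every f ∈ R there exist unique q ∈ R and r ∈ R'[y] with deg_y(r) < d such that f = q·g + r. In particular R/(g) is a free R'-module with basis the classes of 1, y, ..., y^{d−1}. -/
/-!
Over a ring `A` that is complete for an ideal `I`, Mathlib's Weierstrass division divides any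
power series by a polynomial distinguished at `I` (monic, with all lower coefficients in `I`),
with a unique remainder of smaller degree. For `A = K⟦x₁,…,x_m⟧` it is complete for the ideal
generated by the variables, and this ideal is the kernel of the constant coefficient (split off
the part divisible by `x₀` and induct on the number of variables), so a Weierstrass polynomial
is distinguished at it.
-/

namespace MvPowerSeries

theorem span_range_X_eq_ker_constantCoeff (R : Type*) [CommRing R] (n : ℕ) :
    Ideal.span (Set.range X) = RingHom.ker (constantCoeff : MvPowerSeries (Fin n) R →+* R) := by
  refine le_antisymm (Ideal.span_le.mpr ?_) ?_
  · rintro _ ⟨i, rfl⟩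
    exact constantCoeff_X i
  induction n with
  | zero =>
    intro f hf
    suffices f = 0 by simp [this]
    ext e
    rw [Subsingleton.elim e 0]
    exact hf
  | succ n ih =>
    intro f hf
    set e := finSuccEquiv R n
    have hc : PowerSeries.constantCoeff (e f) ∈ Ideal.span (Set.range X) := by
      refine ih (RingHom.mem_ker.mpr ?_)
      rw [← coeff_zero_eq_constantCoeff_apply, ← PowerSeries.coeff_zero_eq_constantCoeff_apply,
        coeff_coeff_finSuccEquiv, Finsupp.cons_zero_zero]
      exact hf
    have hsplit : f = X 0 * e.symm (PowerSeries.mk fun k ↦ PowerSeries.coeff (k + 1) (e f)) +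
        e.symm (PowerSeries.C (PowerSeries.constantCoeff (e f))) := by
      apply e.injective
      rw [map_add, map_mul, finSuccEquiv_X_zero, AlgEquiv.apply_symm_apply,
        AlgEquiv.apply_symm_apply]
      exact PowerSeries.eq_X_mul_shift_add_const (e f)
    have hmap : Ideal.map (e.symm.toRingHom.comp PowerSeries.C)
        (Ideal.span (Set.range X) : Ideal (MvPowerSeries (Fin n) R)) ≤
        Ideal.span (Set.range X) := by
      rw [Ideal.map_span, Ideal.span_le, ← Set.range_comp]
      rintro _ ⟨j, rfl⟩
      refine Ideal.subset_span ⟨j.succ, ?_⟩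
      simp [e, AlgEquiv.eq_symm_apply]
    rw [hsplit]
    exact add_mem (Ideal.mul_mem_right _ _ (Ideal.subset_span ⟨0, rfl⟩))
      (hmap (Ideal.mem_map_of_mem _ hc))

end MvPowerSeries

open PowerSeries

namespace Polynomial.IsDistinguishedAt

variable {A : Type*} [CommRing A] {I : Ideal A} {g : A[X]}

theorem toNat_order_map_eq_natDegree (hg : g.IsDistinguishedAt I) (hI : I ≠ ⊤) :
    ((g : A⟦X⟧).map (Ideal.Quotient.mk I)).order.toNat = g.natDegree := by
  have h := hg.coe_natDegree_eq_order_map (g : A⟦X⟧) 1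
    (by rwa [constantCoeff_one, ← Ideal.ne_top_iff_one]) (mul_one _).symm
  rw [← h, ENat.toNat_natCast]

theorem existsUnique_eq_mul_add [IsAdicComplete I A] (hg : g.IsDistinguishedAt I) (hI : I ≠ ⊤)
    (f : A⟦X⟧) : ∃! qr : A⟦X⟧ × A[X], qr.2.degree < g.natDegree ∧ f = qr.1 * g + qr.2 := by
  have H := hg.isWeierstrassDivisorAt hI
  have hdeg := hg.toNat_order_map_eq_natDegree hI
  obtain ⟨hr, hf⟩ := H.isWeierstrassDivisionAt_div_mod f
  refine ⟨(H.div f, H.mod f), ⟨hdeg ▸ hr, hf.trans (by rw [mul_comm])⟩, ?_⟩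
  rintro ⟨q, r⟩ ⟨hr' : r.degree < g.natDegree, hf' : f = q * g + r⟩
  rw [← hdeg] at hr'
  have heq : (g : A⟦X⟧) * q + r = g * H.div f + H.mod f := by linear_combination hf - hf'
  obtain ⟨rfl, rfl⟩ := H.eq_of_mul_add_eq_mul_add hr' hr heq
  rfl

theorem existsUnique_sub_mem_span [IsAdicComplete I A] (hg : g.IsDistinguishedAt I)
    (hI : I ≠ ⊤) (f : A⟦X⟧) :
    ∃! r : A[X], r.degree < g.natDegree ∧ f - r ∈ Ideal.span {(g : A⟦X⟧)} := by
  obtain ⟨⟨q, r⟩, ⟨hr, hf⟩, huniq⟩ := hg.existsUnique_eq_mul_add hI f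
  refine ⟨r, ⟨hr, Ideal.mem_span_singleton'.mpr ⟨q, by rw [hf]; ring⟩⟩, ?_⟩
  rintro r' ⟨hr', hmem⟩
  obtain ⟨q', hq'⟩ := Ideal.mem_span_singleton'.mp hmem
  exact congrArg Prod.snd (huniq (q', r') ⟨hr', by rw [hq']; ring⟩)

end Polynomial.IsDistinguishedAt

/-- formal Weierstraß division: with `R' = K[[x₁,…,x_{n−1}]]` and
`R = R'[[y]]`, if `g ∈ R'[y]` is a Weierstraß polynomial of degree `d` (monic of
degree `d` with nonleading coefficients vanishing at `0`), then every `f ∈ R` has a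
unique decomposition `f = q·g + r` with `q ∈ R` and `r ∈ R'[y]` of degree `< d`.
In particular every `f` is congruent mod `(g)` to a unique polynomial of degree
`< d`, i.e. `R/(g)` is free over `R'` with basis `1, y, …, y^{d−1}`. -/
theorem weierstrass_division_formal
    (K : Type*) [Field K] (m : ℕ)
    (g : Polynomial (MvPowerSeries (Fin m) K)) (d : ℕ)
    (hmonic : g.Monic) (hdeg : g.natDegree = d)
    (hcoeff : ∀ i < d, MvPowerSeries.constantCoeff (g.coeff i) = 0)
    (f : PowerSeries (MvPowerSeries (Fin m) K)) :
    (∃! qr : PowerSeries (MvPowerSeries (Fin m) K) × Polynomial (MvPowerSeries (Fin m) K),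
        qr.2.degree < (d : WithBot ℕ) ∧
        f = qr.1 * (g : PowerSeries (MvPowerSeries (Fin m) K)) +
          (qr.2 : PowerSeries (MvPowerSeries (Fin m) K))) ∧
    (∃! r : Polynomial (MvPowerSeries (Fin m) K),
        r.degree < (d : WithBot ℕ) ∧
        f - (r : PowerSeries (MvPowerSeries (Fin m) K)) ∈
          Ideal.span {(g : PowerSeries (MvPowerSeries (Fin m) K))}) := by
  set I : Ideal (MvPowerSeries (Fin m) K) := Ideal.span (Set.range MvPowerSeries.X)
  have hI_eq : I = RingHom.ker MvPowerSeries.constantCoeff :=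
    MvPowerSeries.span_range_X_eq_ker_constantCoeff K m
  have hI : I ≠ ⊤ := hI_eq ▸ RingHom.ker_ne_top _
  have hg : g.IsDistinguishedAt I :=
    ⟨⟨fun hi ↦ hI_eq ▸ hcoeff _ (hdeg ▸ hi)⟩, hmonic⟩
  subst hdeg
  exact ⟨hg.existsUnique_eq_mul_add hI f, hg.existsUnique_sub_mem_span hI f⟩
end
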